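/- For a 3×3 symmetric matrix ε with ‖ε‖ < 1, set α = -(1/2)log det(1+ε) and β = (1/8)Tr(ε²) - (1/24)(Tr ε)² + O(‖ε‖³) as above. The Kijowski-Magli energy m + (A/2)α² + Bβ agrees with the Beig-Schmidt energy m(1 + (p/8)Tr(ε²) + (q/8)(Tr ε)²) up to terms of order ‖ε‖³ if and only if mp = B and mq = A - B/3. -/

import Mathlib

open Matrix

attribute [local instance] Matrix.linftyOpNormedRing Matrix.linftyOpNormedAlgebra

/-- The matrix logarithm `log (1 + ε)` defined by the power series
`∑_{k ≥ 1} (-1)^(k+1) ε^k / k`. -/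
noncomputable def matLog1p (ε : Matrix (Fin 3) (Fin 3) ℝ) :
    Matrix (Fin 3) (Fin 3) ℝ :=
  ∑' k : ℕ, ((-1 : ℝ) ^ k / (k + 1)) • ε ^ (k + 1)

/-- `S = -(1/2)·log(1+ε)`. -/
noncomputable def kmStrain (ε : Matrix (Fin 3) (Fin 3) ℝ) :
    Matrix (Fin 3) (Fin 3) ℝ :=
  (-(1/2) : ℝ) • matLog1p ε

/-- `α = Tr S`. -/
noncomputable def kmAlpha (ε : Matrix (Fin 3) (Fin 3) ℝ) : ℝ :=
  (kmStrain ε).trace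

/-- `β = (1/2)Tr(S̃²)` with `S̃` the trace-free part of `S`. -/
noncomputable def kmBeta (ε : Matrix (Fin 3) (Fin 3) ℝ) : ℝ :=
  (1/2 : ℝ) *
    ((kmStrain ε - ((1/3 : ℝ) * (kmStrain ε).trace) • (1 : Matrix (Fin 3) (Fin 3) ℝ)) *
     (kmStrain ε - ((1/3 : ℝ) * (kmStrain ε).trace) • (1 : Matrix (Fin 3) (Fin 3) ℝ))).trace

/-! ### Auxiliary lemmas -/

private lemma term_norm_le (ε : Matrix (Fin 3) (Fin 3) ℝ) (k : ℕ) :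
    ‖((-1 : ℝ) ^ k / (k + 1)) • ε ^ (k + 1)‖ ≤ ‖ε‖ ^ (k + 1) := by
  rw [norm_smul]
  have h1 : ‖((-1 : ℝ) ^ k / (k + 1))‖ ≤ 1 := by
    rw [Real.norm_eq_abs, abs_div, abs_pow, abs_neg, abs_one, one_pow]
    rw [div_le_one (by positivity)]
    simp [abs_of_nonneg (by positivity : (0:ℝ) ≤ (k:ℝ)+1)]
  calc ‖((-1 : ℝ) ^ k / (k + 1))‖ * ‖ε ^ (k+1)‖ ≤ 1 * ‖ε‖ ^ (k+1) :=
        mul_le_mul h1 (norm_pow_le' ε (Nat.succ_pos k)) (norm_nonneg _) zero_le_one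
    _ = ‖ε‖ ^ (k+1) := one_mul _

private lemma summable_log (ε : Matrix (Fin 3) (Fin 3) ℝ) (h : ‖ε‖ < 1) :
    Summable (fun k : ℕ => ((-1 : ℝ) ^ k / (k + 1)) • ε ^ (k + 1)) := by
  have hg : Summable (fun k : ℕ => ‖ε‖ ^ (k + 1)) := by
    simpa using (summable_geometric_of_lt_one (norm_nonneg ε) h).mul_left ‖ε‖ |>.congr
      (fun k => by rw [← pow_succ'])
  exact Summable.of_norm_bounded hg (term_norm_le ε)

private lemma log_expansion (ε : Matrix (Fin 3) (Fin 3) ℝ) (h : ‖ε‖ ≤ 1/2) :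
    ‖matLog1p ε - (ε - (1/2 : ℝ) • (ε * ε))‖ ≤ 2 * ‖ε‖ ^ 3 := by
  have h1 : ‖ε‖ < 1 := lt_of_le_of_lt h (by norm_num)
  set f : ℕ → Matrix (Fin 3) (Fin 3) ℝ := fun k => ((-1 : ℝ) ^ k / (k + 1)) • ε ^ (k + 1) with hf
  have hs : Summable f := summable_log ε h1
  have hsplit : (∑ i ∈ Finset.range 2, f i) + ∑' i, f (i + 2) = ∑' i, f i :=
    Summable.sum_add_tsum_nat_add 2 hs
  have hsum2 : (∑ i ∈ Finset.range 2, f i) = ε - (1/2 : ℝ) • (ε * ε) := by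
    simp only [hf, Finset.sum_range_succ, Finset.sum_range_zero, zero_add]
    norm_num [pow_succ, pow_zero, one_mul]
    module
  have heq : matLog1p ε - (ε - (1/2 : ℝ) • (ε * ε)) = ∑' i, f (i + 2) := by
    rw [matLog1p, ← hsplit, hsum2]; abel
  rw [heq]
  have hsn : Summable (fun i : ℕ => ‖ε‖ ^ (i + 3)) := by
    simpa using (summable_geometric_of_lt_one (norm_nonneg ε) h1).mul_left (‖ε‖^3) |>.congr
      (fun k => by rw [← pow_add, add_comm 3 k])
  have hb : ∀ i : ℕ, ‖f (i + 2)‖ ≤ ‖ε‖ ^ (i + 3) := fun i => by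
    have := term_norm_le ε (i + 2)
    simpa [hf, show i + 2 + 1 = i + 3 from rfl] using this
  have h2 : ‖∑' i, f (i + 2)‖ ≤ ∑' i, ‖ε‖ ^ (i + 3) :=
    (norm_tsum_le_tsum_norm (hsn.of_nonneg_of_le (fun _ => norm_nonneg _) hb)).trans
      (Summable.tsum_le_tsum hb (hsn.of_nonneg_of_le (fun _ => norm_nonneg _) hb) hsn)
  refine h2.trans ?_
  have : ∑' i : ℕ, ‖ε‖ ^ (i + 3) = ‖ε‖ ^ 3 * (1 - ‖ε‖)⁻¹ := by
    rw [← tsum_geometric_of_lt_one (norm_nonneg ε) h1, ← tsum_mul_left]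
    exact tsum_congr fun i => by rw [← pow_add, add_comm 3 i]
  rw [this]
  have h12 : (1 - ‖ε‖)⁻¹ ≤ 2 := by
    rw [inv_le_comm₀ (by linarith) (by norm_num)]
    linarith
  calc ‖ε‖ ^ 3 * (1 - ‖ε‖)⁻¹ ≤ ‖ε‖ ^ 3 * 2 :=
        mul_le_mul_of_nonneg_left h12 (by positivity)
    _ = 2 * ‖ε‖ ^ 3 := mul_comm _ _

private lemma entry_norm_le (M : Matrix (Fin 3) (Fin 3) ℝ) (i j : Fin 3) : ‖M i j‖ ≤ ‖M‖ := by
  have h : ‖M i j‖₊ ≤ ‖M‖₊ := by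
    rw [Matrix.linfty_opNNNorm_def]
    exact le_trans
      (Finset.single_le_sum (f := fun j => ‖M i j‖₊) (fun _ _ => zero_le) (Finset.mem_univ j))
      (Finset.le_sup (f := fun i => ∑ j : Fin 3, ‖M i j‖₊) (Finset.mem_univ i))
  exact_mod_cast h

private lemma abs_trace_le (M : Matrix (Fin 3) (Fin 3) ℝ) : |M.trace| ≤ 3 * ‖M‖ := by
  have h : ∀ i : Fin 3, |M i i| ≤ ‖M‖ := fun i => entry_norm_le M i i
  calc |M.trace| ≤ ∑ i : Fin 3, |M i i| := Finset.abs_sum_le_sum_abs _ _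
    _ ≤ ∑ _i : Fin 3, ‖M‖ := Finset.sum_le_sum (fun i _ => h i)
    _ = 3 * ‖M‖ := by simp

private lemma beta_eq (ε : Matrix (Fin 3) (Fin 3) ℝ) :
    kmBeta ε = (1/2) * ((kmStrain ε * kmStrain ε).trace) - (1/6) * (kmAlpha ε)^2 := by
  rw [kmBeta, kmAlpha]
  simp only [sub_mul, mul_sub, Matrix.smul_mul, Matrix.mul_smul, mul_one, one_mul,
    Matrix.one_mul, Matrix.mul_one, smul_smul, Matrix.trace_sub, Matrix.trace_smul,
    Matrix.trace_one, smul_eq_mul]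
  norm_num
  ring

private lemma km_key (A B : ℝ) (ε : Matrix (Fin 3) (Fin 3) ℝ) (h : ‖ε‖ ≤ 1/2) :
    |(A/2) * (kmAlpha ε)^2 + B * kmBeta ε
      - ((B/8) * (ε*ε).trace + ((A - B/3)/8) * ε.trace^2)|
    ≤ (5*|A| + 4*|B|) * ‖ε‖^3 := by
  have hε0 : (0:ℝ) ≤ ‖ε‖ := norm_nonneg ε
  set Y : Matrix (Fin 3) (Fin 3) ℝ := matLog1p ε - ε with hYdef
  have hY : ‖Y‖ ≤ (3/2) * ‖ε‖^2 := by
    have h1 := log_expansion ε h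
    have h2 : Y = (matLog1p ε - (ε - (1/2 : ℝ) • (ε * ε))) + (-(1/2) : ℝ) • (ε * ε) := by
      rw [hYdef]; module
    have h3 : ‖(-(1/2) : ℝ) • (ε * ε)‖ ≤ (1/2) * ‖ε‖^2 := by
      rw [norm_smul, Real.norm_eq_abs]
      have h99 := norm_mul_le ε ε
      have habs : |(-(1/2):ℝ)| = 1/2 := by norm_num
      rw [habs, pow_two]
      linarith
    calc ‖Y‖ ≤ ‖matLog1p ε - (ε - (1/2 : ℝ) • (ε * ε))‖ + ‖(-(1/2) : ℝ) • (ε * ε)‖ := by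
          rw [h2]; exact norm_add_le _ _
      _ ≤ 2 * ‖ε‖^3 + (1/2) * ‖ε‖^2 := add_le_add h1 h3
      _ ≤ (3/2) * ‖ε‖^2 := by nlinarith
  have hL : matLog1p ε = ε + Y := by rw [hYdef]; abel
  have hαdef : kmAlpha ε = -(1/2) * ε.trace + (-(1/2) * Y.trace) := by
    rw [kmAlpha, kmStrain, Matrix.trace_smul, hL, Matrix.trace_add, smul_eq_mul]; ring
  have he₁ : |(-(1/2) * Y.trace)| ≤ (9/4) * ‖ε‖^2 := by
    rw [abs_mul]
    have := abs_trace_le Y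
    have h9 : |(-(1/2) : ℝ)| = 1/2 := by norm_num
    rw [h9]
    nlinarith [abs_nonneg Y.trace]
  have htr : |ε.trace| ≤ 3 * ‖ε‖ := abs_trace_le ε
  have hd₁ : |(kmAlpha ε)^2 - (1/4) * ε.trace^2| ≤ 10 * ‖ε‖^3 := by
    have hid : (kmAlpha ε)^2 - (1/4) * ε.trace^2
        = (-(1/2) * Y.trace) * ((-(1/2) * Y.trace) - ε.trace) := by
      rw [hαdef]; ring
    rw [hid, abs_mul]
    have h4 : |(-(1/2) * Y.trace) - ε.trace| ≤ (9/4) * ‖ε‖^2 + 3 * ‖ε‖ :=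
      (abs_sub _ _).trans (add_le_add he₁ htr)
    have h5 := abs_nonneg (-(1/2) * Y.trace)
    nlinarith [mul_le_mul he₁ h4 (abs_nonneg _) (by positivity : (0:ℝ) ≤ (9/4) * ‖ε‖^2),
      pow_nonneg hε0 3, mul_le_mul_of_nonneg_left h (pow_nonneg hε0 3)]
  have hSS : (kmStrain ε * kmStrain ε).trace
      = (1/4) * (((ε*ε).trace) + ((ε*Y).trace + (Y*ε).trace + (Y*Y).trace)) := by
    rw [kmStrain, Matrix.smul_mul, Matrix.mul_smul, smul_smul, hL]
    rw [Matrix.trace_smul, smul_eq_mul]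
    have : (ε + Y) * (ε + Y) = ε*ε + (ε*Y + Y*ε + Y*Y) := by
      rw [add_mul, mul_add, mul_add]; abel
    rw [this]
    simp only [Matrix.trace_add]
    ring
  have hbnd : ∀ (M N : Matrix (Fin 3) (Fin 3) ℝ), |(M * N).trace| ≤ 3 * (‖M‖ * ‖N‖) :=
    fun M N => (abs_trace_le _).trans (by nlinarith [norm_mul_le M N, norm_nonneg (M*N)])
  have hd₂ : |(kmStrain ε * kmStrain ε).trace - (1/4) * (ε*ε).trace| ≤ 4 * ‖ε‖^3 := by
    rw [hSS]
    have h6 : |(ε*Y).trace| ≤ 3 * (‖ε‖ * ‖Y‖) := hbnd ε Y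
    have h7 : |(Y*ε).trace| ≤ 3 * (‖Y‖ * ‖ε‖) := hbnd Y ε
    have h8 : |(Y*Y).trace| ≤ 3 * (‖Y‖ * ‖Y‖) := hbnd Y Y
    have hYn : (0:ℝ) ≤ ‖Y‖ := norm_nonneg Y
    have habs : |(1/4) * (((ε*ε).trace) + ((ε*Y).trace + (Y*ε).trace + (Y*Y).trace))
        - (1/4) * (ε*ε).trace| = (1/4) * |(ε*Y).trace + (Y*ε).trace + (Y*Y).trace| := by
      rw [show (1/4 : ℝ) * (((ε*ε).trace) + ((ε*Y).trace + (Y*ε).trace + (Y*Y).trace))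
        - (1/4) * (ε*ε).trace = (1/4) * ((ε*Y).trace + (Y*ε).trace + (Y*Y).trace) by ring,
        abs_mul]
      norm_num
    rw [habs]
    have h10 : |(ε*Y).trace + (Y*ε).trace + (Y*Y).trace|
        ≤ 3 * (‖ε‖ * ‖Y‖) + 3 * (‖Y‖ * ‖ε‖) + 3 * (‖Y‖ * ‖Y‖) := by
      calc |(ε*Y).trace + (Y*ε).trace + (Y*Y).trace|
          ≤ |(ε*Y).trace + (Y*ε).trace| + |(Y*Y).trace| := abs_add_le _ _
        _ ≤ |(ε*Y).trace| + |(Y*ε).trace| + |(Y*Y).trace| :=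
            add_le_add_left (abs_add_le _ _) _
        _ ≤ _ := by linarith
    nlinarith [mul_le_mul hY hY hYn (by positivity : (0:ℝ) ≤ (3/2)*‖ε‖^2),
      mul_le_mul_of_nonneg_left hY hε0]
  have hE : (A/2) * (kmAlpha ε)^2 + B * kmBeta ε
      - ((B/8) * (ε*ε).trace + ((A - B/3)/8) * ε.trace^2)
      = (A/2 - B/6) * ((kmAlpha ε)^2 - (1/4) * ε.trace^2)
        + (B/2) * ((kmStrain ε * kmStrain ε).trace - (1/4) * (ε*ε).trace) := by
    rw [beta_eq]; ring
  rw [hE]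
  calc |(A/2 - B/6) * ((kmAlpha ε)^2 - (1/4) * ε.trace^2)
        + (B/2) * ((kmStrain ε * kmStrain ε).trace - (1/4) * (ε*ε).trace)|
      ≤ |A/2 - B/6| * |(kmAlpha ε)^2 - (1/4) * ε.trace^2|
        + |B/2| * |(kmStrain ε * kmStrain ε).trace - (1/4) * (ε*ε).trace| := by
        refine (abs_add_le _ _).trans ?_
        rw [abs_mul, abs_mul]
    _ ≤ (|A|/2 + |B|/6) * (10 * ‖ε‖^3) + (|B|/2) * (4 * ‖ε‖^3) := by
        refine add_le_add ?_ ?_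
        · refine mul_le_mul ?_ hd₁ (abs_nonneg _) (by positivity)
          calc |A/2 - B/6| ≤ |A/2| + |B/6| := abs_sub _ _
            _ = |A|/2 + |B|/6 := by rw [abs_div, abs_div]; norm_num
        · refine mul_le_mul ?_ hd₂ (abs_nonneg _) (by positivity)
          rw [abs_div]; norm_num
    _ ≤ (5*|A| + 4*|B|) * ‖ε‖^3 := by nlinarith [abs_nonneg A, abs_nonneg B, pow_nonneg hε0 3]

private lemma coef_zero {c D δ : ℝ} (hδ : 0 < δ)
    (h : ∀ t : ℝ, 0 < t → t < δ → |c| * t^2 ≤ D * t^3) : c = 0 := by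
  by_contra hc
  have hc' : 0 < |c| := abs_pos.mpr hc
  set t := min (δ/2) (|c|/(2*(|D|+1))) with ht
  have ht0 : 0 < t := lt_min (by linarith) (by positivity)
  have htδ : t < δ := lt_of_le_of_lt (min_le_left _ _) (by linarith)
  have h1 := h t ht0 htδ
  have h2 : t ≤ |c|/(2*(|D|+1)) := min_le_right _ _
  rw [le_div_iff₀ (by positivity)] at h2
  have h4 : |D| * t ≤ |c|/2 := by nlinarith
  have h3 : D * t^3 ≤ |D| * t^3 :=
    mul_le_mul_of_nonneg_right (le_abs_self D) (by positivity)
  have h5 : |D| * t^3 ≤ (|c|/2) * t^2 := by nlinarith [mul_le_mul_of_nonneg_right h4 (sq_nonneg t)]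
  nlinarith [mul_pos hc' (pow_pos ht0 2)]

/-- The Kijowski-Magli energy `m + (A/2)α² + Bβ` agrees with the Beig-Schmidt energy
`m(1 + (p/8)Tr(ε²) + (q/8)(Tr ε)²)` up to terms of order `‖ε‖³` if and only if
`mp = B` and `mq = A - B/3`. -/
theorem km_bs_agree_iff (m A B p q : ℝ) (hm : 0 < m) :
    (∃ C > (0 : ℝ), ∃ δ > (0 : ℝ), ∀ ε : Matrix (Fin 3) (Fin 3) ℝ,
      ε.IsSymm → ‖ε‖ < δ →
        |(m + (A/2) * (kmAlpha ε) ^ 2 + B * kmBeta ε) -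
            m * (1 + (p/8) * (ε * ε).trace + (q/8) * ε.trace ^ 2)| ≤ C * ‖ε‖ ^ 3)
      ↔ (m * p = B ∧ m * q = A - B / 3) := by
  constructor
  · rintro ⟨C, hC, δ, hδ, hbound⟩
    set K : ℝ := 5*|A| + 4*|B| with hK
    have hK0 : 0 ≤ K := by positivity
    set δ' : ℝ := min δ (1/2) with hδ'
    have hδ'0 : 0 < δ' := lt_min hδ (by norm_num)
    set c₁ : ℝ := (B - m*p)/8 with hc₁
    set c₂ : ℝ := (A - B/3 - m*q)/8 with hc₂
    have main : ∀ ε : Matrix (Fin 3) (Fin 3) ℝ, ε.IsSymm → ‖ε‖ < δ' →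
        |c₁ * (ε*ε).trace + c₂ * ε.trace^2| ≤ (C + K) * ‖ε‖^3 := by
      intro ε hsym hlt
      have h1 := hbound ε hsym (lt_of_lt_of_le hlt (min_le_left _ _))
      have h2 := km_key A B ε (le_of_lt (lt_of_lt_of_le hlt (min_le_right _ _)))
      have hid : c₁ * (ε*ε).trace + c₂ * ε.trace^2
          = ((m + (A/2) * (kmAlpha ε) ^ 2 + B * kmBeta ε) -
              m * (1 + (p/8) * (ε * ε).trace + (q/8) * ε.trace ^ 2))
            - ((A/2) * (kmAlpha ε)^2 + B * kmBeta ε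
              - ((B/8) * (ε*ε).trace + ((A - B/3)/8) * ε.trace^2)) := by
        rw [hc₁, hc₂]; ring
      rw [hid]
      calc |_ - _| ≤ _ + _ := abs_sub _ _
        _ ≤ C*‖ε‖^3 + K*‖ε‖^3 := add_le_add h1 h2
        _ = (C+K)*‖ε‖^3 := by ring
    have test1 : ∀ t : ℝ, 0 < t → t < δ' → |3*c₁ + 9*c₂| * t^2 ≤ (C+K) * t^3 := by
      intro t ht hlt
      have hnorm : ‖Matrix.diagonal (fun _ : Fin 3 => t)‖ = t := by
        rw [Matrix.linfty_opNorm_diagonal, (pi_norm_const t).trans (Real.norm_eq_abs t),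
          abs_of_pos ht]
      have h1 := main (Matrix.diagonal (fun _ : Fin 3 => t)) (Matrix.isSymm_diagonal _)
        (by rw [hnorm]; exact hlt)
      rw [hnorm, Matrix.diagonal_mul_diagonal] at h1
      have htr1 : (Matrix.diagonal (fun _ : Fin 3 => t * t)).trace = 3 * t^2 := by
        simp [Matrix.trace_diagonal, Fin.sum_univ_three, sq]
      have htr2 : (Matrix.diagonal (fun _ : Fin 3 => t)).trace = 3 * t := by
        simp [Matrix.trace_diagonal, Fin.sum_univ_three]
      rw [htr1, htr2] at h1
      calc |3*c₁ + 9*c₂| * t^2 = |(3*c₁ + 9*c₂) * t^2| := by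
            rw [abs_mul, abs_of_nonneg (sq_nonneg t)]
        _ = |c₁ * (3 * t^2) + c₂ * (3*t)^2| := by ring_nf
        _ ≤ (C+K) * t^3 := h1
    have test2 : ∀ t : ℝ, 0 < t → t < δ' → |c₁ + c₂| * t^2 ≤ (C+K) * t^3 := by
      intro t ht hlt
      have hnorm : ‖Matrix.diagonal (![t,0,0] : Fin 3 → ℝ)‖ ≤ t := by
        rw [Matrix.linfty_opNorm_diagonal]
        refine (pi_norm_le_iff_of_nonneg ht.le).mpr fun i => ?_
        fin_cases i <;> simp [abs_of_pos ht, le_of_lt ht]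
      have h1 := main (Matrix.diagonal (![t,0,0] : Fin 3 → ℝ)) (Matrix.isSymm_diagonal _)
        (lt_of_le_of_lt hnorm hlt)
      rw [Matrix.diagonal_mul_diagonal] at h1
      have htr1 : (Matrix.diagonal (fun i => (![t,0,0] : Fin 3 → ℝ) i * (![t,0,0] : Fin 3 → ℝ) i)).trace = t^2 := by
        simp [Matrix.trace_diagonal, Fin.sum_univ_three, sq]
      have htr2 : (Matrix.diagonal (![t,0,0] : Fin 3 → ℝ)).trace = t := by
        simp [Matrix.trace_diagonal, Fin.sum_univ_three]
      rw [htr1, htr2] at h1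
      have hmono : (C+K) * ‖Matrix.diagonal (![t,0,0] : Fin 3 → ℝ)‖^3 ≤ (C+K) * t^3 := by
        have hCK : (0:ℝ) ≤ C + K := by linarith
        exact mul_le_mul_of_nonneg_left
          (pow_le_pow_left₀ (norm_nonneg _) hnorm 3) hCK
      calc |c₁ + c₂| * t^2 = |(c₁ + c₂) * t^2| := by
            rw [abs_mul, abs_of_nonneg (sq_nonneg t)]
        _ = |c₁ * t^2 + c₂ * t^2| := by ring_nf
        _ ≤ (C+K) * ‖Matrix.diagonal (![t,0,0] : Fin 3 → ℝ)‖^3 := h1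
        _ ≤ (C+K) * t^3 := hmono
    have e1 : 3*c₁ + 9*c₂ = 0 := coef_zero hδ'0 test1
    have e2 : c₁ + c₂ = 0 := coef_zero hδ'0 test2
    have hc₂0 : c₂ = 0 := by linarith
    have hc₁0 : c₁ = 0 := by linarith
    rw [hc₁] at hc₁0
    rw [hc₂] at hc₂0
    constructor <;> linarith
  · rintro ⟨h1, h2⟩
    refine ⟨5*|A| + 4*|B| + 1, by positivity, 1/2, by norm_num, ?_⟩
    intro ε _hsym hlt
    have hk := km_key A B ε hlt.le
    have hid : (m + (A/2) * (kmAlpha ε) ^ 2 + B * kmBeta ε) -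
        m * (1 + (p/8) * (ε * ε).trace + (q/8) * ε.trace ^ 2)
        = (A/2) * (kmAlpha ε)^2 + B * kmBeta ε
          - ((B/8) * (ε*ε).trace + ((A - B/3)/8) * ε.trace^2) := by
      linear_combination (-(ε*ε).trace/8) * h1 + (-(ε.trace^2)/8) * h2
    rw [hid]
    refine hk.trans ?_
    nlinarith [pow_nonneg (norm_nonneg ε) 3]
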